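/- arXiv:1912.00574 — 2 statements merged into one kernel-verified Lean document; each statement's English description precedes it below -/
import Mathlib

section
/- Let l < 0 < u, s₀ = u/(u − l), t₀ = −u·l/(u − l). If h(z) = s·z + t is any linear function with max(z, 0) ≤ h(z) for all z ∈ [l, u], then h(z) ≥ s₀ z + t₀ for all z ∈ [l, u]; i.e., the chord is the tightest upper-bounding line for ReLU on [l, u]. -/
/-!
The difference between a line and the chord is affine, so it is nonnegative on `[l, u]` as soon as
it is nonnegative at the two endpoints. There the chord meets ReLU: it vanishes at `l` and equals
`u` at `u`, and any upper bound of ReLU is at least these values.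
-/

open Set

lemma affine_le_affine_of_mem_Icc {a b c d l u z : ℝ} (hl : a * l + b ≤ c * l + d)
    (hu : a * u + b ≤ c * u + d) (hz : z ∈ Icc l u) : a * z + b ≤ c * z + d := by
  obtain ⟨hlz, hzu⟩ := hz
  -- the difference has slope `c - a`, so it is minimised at `l` or at `u` according to its sign
  rcases le_total 0 (c - a) with hslope | hslope
  · nlinarith [mul_nonneg hslope (sub_nonneg.2 hlz)]
  · nlinarith [mul_nonneg_of_nonpos_of_nonpos hslope (sub_nonpos.2 hzu)]

noncomputable def reluChord (l u z : ℝ) : ℝ := u / (u - l) * z + -(u * l) / (u - l)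

lemma reluChord_left {l u : ℝ} (h : l ≠ u) : reluChord l u l = 0 := by
  have : u - l ≠ 0 := sub_ne_zero.2 h.symm
  unfold reluChord
  field_simp
  ring

lemma reluChord_right {l u : ℝ} (h : l ≠ u) : reluChord l u u = u := by
  have : u - l ≠ 0 := sub_ne_zero.2 h.symm
  unfold reluChord
  field_simp
  ring

/-- For `l < 0 < u`, the chord is the tightest linear upper bound for ReLU on `[l, u]`:
any linear upper bound dominates the chord pointwise on the interval. -/
theorem relu_chord_tightest (l u : ℝ) (hl : l < 0) (hu : 0 < u) (s t : ℝ)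
    (h : ∀ z ∈ Set.Icc l u, max z 0 ≤ s * z + t) :
    ∀ z ∈ Set.Icc l u,
      (u / (u - l)) * z + (-(u * l) / (u - l)) ≤ s * z + t := by
  have hlu : l < u := hl.trans hu
  have at_left : reluChord l u l ≤ s * l + t := by
    simpa [reluChord_left hlu.ne, max_eq_right hl.le] using h l ⟨le_rfl, hlu.le⟩
  have at_right : reluChord l u u ≤ s * u + t := by
    simpa [reluChord_right hlu.ne, max_eq_left hu.le] using h u ⟨hlu.le, le_rfl⟩
  exact fun z hz ↦ affine_le_affine_of_mem_Icc at_left at_right hz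
end

section
/- Let w ∈ ℝⁿ, and suppose vectors z, a ∈ ℝⁿ satisfy sᴸᵢ zᵢ + tᴸᵢ ≤ aᵢ ≤ sᵁᵢ zᵢ + tᵁᵢ for all i. Writing relu(w)ᵢ = max(wᵢ, 0) and neg(w)ᵢ = min(wᵢ, 0), we have Σᵢ wᵢ aᵢ ≥ Σᵢ (relu(w)ᵢ sᴸᵢ + neg(w)ᵢ sᵁᵢ) zᵢ + Σᵢ (relu(w)ᵢ tᴸᵢ + neg(w)ᵢ tᵁᵢ), and the analogous upper bound holds with the roles of (sᴸ, tᴸ) and (sᵁ, tᵁ) swapped. -/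
/-- Vectorized one-layer linear relaxation step of CROWN: componentwise linear
sandwich bounds on activations yield linear sandwich bounds on a linear functional. -/
theorem crown_vector_step (n : ℕ) (w z a sL tL sU tU : Fin n → ℝ)
    (h : ∀ i, sL i * z i + tL i ≤ a i ∧ a i ≤ sU i * z i + tU i) :
    (∑ i, w i * a i ≥
      ∑ i, (max (w i) 0 * sL i + min (w i) 0 * sU i) * z i +
      ∑ i, (max (w i) 0 * tL i + min (w i) 0 * tU i)) ∧
    (∑ i, w i * a i ≤
      ∑ i, (max (w i) 0 * sU i + min (w i) 0 * sL i) * z i +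
      ∑ i, (max (w i) 0 * tU i + min (w i) 0 * tL i)) := by
  constructor
  · rw [← Finset.sum_add_distrib]
    apply Finset.sum_le_sum
    intro i _
    obtain ⟨h1, h2⟩ := h i
    rcases le_total (w i) 0 with hw | hw
    · rw [max_eq_right hw, min_eq_left hw]
      nlinarith
    · rw [max_eq_left hw, min_eq_right hw]
      nlinarith
  · rw [← Finset.sum_add_distrib]
    apply Finset.sum_le_sum
    intro i _
    obtain ⟨h1, h2⟩ := h i
    rcases le_total (w i) 0 with hw | hw
    · rw [max_eq_right hw, min_eq_left hw]
      nlinarith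
    · rw [max_eq_left hw, min_eq_right hw]
      nlinarith
end
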